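/- arXiv:2206.08804 — 2 statements merged into one kernel-verified Lean document; each statement's English description precedes it below -/
import Mathlib

section
/- For a rule set with K disjoint rules over a k-class target, the approximate-NML distribution P^apprNML_M(y^n|x^n) = P_{M,θ̂}(y^n|x^n) / ∏_i R(|S_i|,k) coincides with the exact NML distribution P^NML_M(y^n|x^n). -/
open Finset

/-- Number of occurrences of class `j` in the sequence `z` of length `n`. -/
def cnt {n k : ℕ} (z : Fin n → Fin k) (j : Fin k) : ℕ :=
  (Finset.univ.filter (fun i => z i = j)).card

/-- Maximized categorical likelihood of the sequence `z`:
`∏_j (c_j/n)^{c_j}`, with the convention `0^0 = 1`. -/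
noncomputable def mlLik {n k : ℕ} (z : Fin n → Fin k) : ℝ :=
  ∏ j : Fin k, ((cnt z j : ℝ) / (n : ℝ)) ^ (cnt z j)

/-- The NML normalizing constant (parametric complexity) of the categorical
model with `k` classes and `n` observations. -/
noncomputable def Rnk (n k : ℕ) : ℝ := ∑ z : Fin n → Fin k, mlLik z

/-- Number of occurrences of class `j` among the positions of block `i`. -/
def cblock {n k K : ℕ} (b : Fin n → Fin (K + 1)) (z : Fin n → Fin k) (i : Fin (K + 1))
    (j : Fin k) : ℕ :=
  (Finset.univ.filter (fun x => b x = i ∧ z x = j)).card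

/-- Size of block `i` of the partition encoded by the block assignment `b`. -/
def bsize {n K : ℕ} (b : Fin n → Fin (K + 1)) (i : Fin (K + 1)) : ℕ :=
  (Finset.univ.filter (fun x => b x = i)).card

/-- Maximized likelihood of the partition model: each block is fitted with its
empirical class frequencies. -/
noncomputable def partLik {n k K : ℕ} (b : Fin n → Fin (K + 1)) (z : Fin n → Fin k) : ℝ :=
  ∏ i : Fin (K + 1), ∏ j : Fin k,
    ((cblock b z i j : ℝ) / (bsize b i : ℝ)) ^ cblock b z i j

/-- Generalized maximized likelihood for sequences indexed by any fintype. -/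
noncomputable def mlA {α : Type*} [Fintype α] {k : ℕ} (w : α → Fin k) : ℝ :=
  ∏ j : Fin k, (((Finset.univ.filter (fun x => w x = j)).card : ℝ) / (Fintype.card α : ℝ))
      ^ (Finset.univ.filter (fun x => w x = j)).card

lemma mlA_comp_equiv {α β : Type*} [Fintype α] [Fintype β] {k : ℕ} (e : α ≃ β)
    (w : β → Fin k) : mlA (w ∘ e) = mlA w := by
  unfold mlA
  have hcard : Fintype.card α = Fintype.card β := Fintype.card_congr e
  refine Finset.prod_congr rfl (fun j _ => ?_)
  have hc : (Finset.univ.filter (fun x => (w ∘ e) x = j)).card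
      = (Finset.univ.filter (fun y => w y = j)).card := by
    rw [← Fintype.card_subtype, ← Fintype.card_subtype]
    exact Fintype.card_congr (e.subtypeEquiv (fun x => by simp))
  rw [hc, hcard]

lemma sum_mlA {α : Type*} [Fintype α] [DecidableEq α] (k : ℕ) :
    ∑ w : α → Fin k, mlA w = Rnk (Fintype.card α) k := by
  have hml : ∀ z : Fin (Fintype.card α) → Fin k, mlLik z = mlA z := by
    intro z
    unfold mlLik mlA cnt
    simp [Fintype.card_fin]
  rw [Rnk]
  rw [← Equiv.sum_comp (Equiv.arrowCongr (Fintype.equivFin α) (Equiv.refl (Fin k)))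
    (fun z => mlLik z)]
  refine Finset.sum_congr rfl (fun w _ => ?_)
  rw [hml]
  have : (Equiv.arrowCongr (Fintype.equivFin α) (Equiv.refl (Fin k))) w
      = w ∘ (Fintype.equivFin α).symm := by
    funext x; simp [Equiv.arrowCongr]
  rw [this, mlA_comp_equiv (Fintype.equivFin α).symm w]

/-- Recombining block-wise sequences into a full sequence. -/
def blockEquiv {n k K : ℕ} (b : Fin n → Fin (K + 1)) :
    (∀ i : Fin (K + 1), {x // b x = i} → Fin k) ≃ (Fin n → Fin k) where
  toFun p x := p (b x) ⟨x, rfl⟩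
  invFun z i x := z x.1
  left_inv p := by
    funext i x
    obtain ⟨x, rfl⟩ := x
    rfl
  right_inv z := rfl

lemma partLik_eq_prod_mlA {n k K : ℕ} (b : Fin n → Fin (K + 1)) (z : Fin n → Fin k) :
    partLik b z = ∏ i : Fin (K + 1), mlA (fun x : {x // b x = i} => z x.1) := by
  unfold partLik mlA
  refine Finset.prod_congr rfl (fun i _ => Finset.prod_congr rfl (fun j _ => ?_))
  have h1 : cblock b z i j = (Finset.univ.filter (fun x : {x // b x = i} => z x.1 = j)).card := by
    rw [cblock, ← Fintype.card_subtype, ← Fintype.card_subtype]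
    exact (Fintype.card_congr
      (Equiv.subtypeSubtypeEquivSubtypeInter (fun x => b x = i) (fun x => z x = j))).symm
  have h2 : bsize b i = Fintype.card {x // b x = i} := by
    rw [bsize, Fintype.card_subtype]
  rw [h1, h2]

/-- For a rule set with disjoint rules, the approximate-NML distribution
coincides with the exact NML distribution. -/
theorem stmt8 (n k K : ℕ) (b : Fin n → Fin (K + 1)) (y : Fin n → Fin k) :
    partLik b y / (∏ i : Fin (K + 1), Rnk (bsize b i) k)
      = partLik b y / (∑ z : Fin n → Fin k, partLik b z) := by
  have hsum : ∑ z : Fin n → Fin k, partLik b z = ∏ i : Fin (K + 1), Rnk (bsize b i) k := by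
    have hres : ∀ (p : ∀ i : Fin (K + 1), {x // b x = i} → Fin k) (i : Fin (K + 1)),
        (fun x : {x // b x = i} => blockEquiv b p x.1) = p i := by
      intro p i
      funext x
      obtain ⟨x, hx⟩ := x
      subst hx
      rfl
    calc ∑ z : Fin n → Fin k, partLik b z
        = ∑ p : ∀ i : Fin (K + 1), {x // b x = i} → Fin k,
            partLik b (blockEquiv b p) := (Equiv.sum_comp (blockEquiv b) _).symm
      _ = ∑ p : ∀ i : Fin (K + 1), {x // b x = i} → Fin k,
            ∏ i : Fin (K + 1), mlA (p i) := by
          refine Finset.sum_congr rfl (fun p _ => ?_)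
          rw [partLik_eq_prod_mlA]
          exact Finset.prod_congr rfl (fun i _ => by rw [hres p i])
      _ = ∏ i : Fin (K + 1), ∑ w : {x // b x = i} → Fin k, mlA w := by
          rw [Finset.prod_univ_sum (fun _ => Finset.univ) (fun i w => mlA w)]
          rw [Fintype.piFinset_univ]
      _ = ∏ i : Fin (K + 1), Rnk (bsize b i) k := by
          refine Finset.prod_congr rfl (fun i _ => ?_)
          rw [sum_mlA, bsize, Fintype.card_subtype]
  rw [hsum]
end

section
/- Fix k ≥ 2. There exist constants c and C such that for all n ≥ 1, |log R(n,k) − ((k−1)/2) log n| ≤ C, i.e. log R(n,k) = ((k−1)/2) log n + O(1). -/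
/-
Grouping the sequences `z` by their count vector `c`, `R(n,k) = ∑_c n!/∏ c_j! ∏ (c_j/n)^{c_j}`.
Writing `m! = σ(m) (m/e)^m`, the term of `c` is exactly `σ(n) / ∏ σ(c_j)`, and Stirling's bounds
give `√(m+1) ≤ σ(m) ≤ e √(m+1)`. Hence `R(n,k)` is within constant factors of
`√(n+1) ∑_c ∏_j (c_j+1)^{-1/2}`, and this sum is of order `(n+1)^{(k-2)/2}`. From below, each of
the `C(n+k-1, k-1) ≥ (n+1)^{k-1}/(k-1)!` compositions contributes at least `(n+1)^{-k/2}`. From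
above, some `c_j + 1` is at least `(n+1)/k`, so its factor is at most `√(k/(n+1))`, while the
other `k-1` coordinates determine `c` and contribute at most
`(∑_{m ≤ n} (m+1)^{-1/2})^{k-1} ≤ (2√(n+1))^{k-1}`.
-/

open Finset

open Real
open scoped Nat

noncomputable def stirlingFactor (m : ℕ) : ℝ := m ! / (m / exp 1) ^ m

lemma sqrt_succ_le_stirlingFactor (m : ℕ) : √(m + 1) ≤ stirlingFactor m := by
  rcases eq_or_ne m 0 with rfl | hm
  · simp [stirlingFactor]
  have hm1 : (1 : ℝ) ≤ m := by exact_mod_cast Nat.one_le_iff_ne_zero.2 hm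
  calc √(m + 1) ≤ √(2 * π * m) := by gcongr; nlinarith [pi_gt_three]
    _ ≤ stirlingFactor m := by
      rw [stirlingFactor, le_div_iff₀ (by positivity)]
      exact Stirling.le_factorial_stirling m

lemma stirlingFactor_pos (m : ℕ) : 0 < stirlingFactor m :=
  (sqrt_pos.2 (by positivity)).trans_le (sqrt_succ_le_stirlingFactor m)

lemma stirlingFactor_le (m : ℕ) : stirlingFactor m ≤ exp 1 * √(m + 1) := by
  rcases eq_or_ne m 0 with rfl | hm
  · simp [stirlingFactor]
  obtain ⟨p, rfl⟩ := Nat.exists_eq_succ_of_ne_zero hm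
  have hseq : Stirling.stirlingSeq (p + 1) ≤ exp 1 / √2 := by
    simpa [Stirling.stirlingSeq_one] using Stirling.stirlingSeq'_antitone (Nat.zero_le p)
  have hfac : stirlingFactor (p + 1) = Stirling.stirlingSeq (p + 1) * (√2 * √(↑(p + 1))) := by
    rw [stirlingFactor, Stirling.stirlingSeq, sqrt_mul zero_le_two]
    field_simp
  calc stirlingFactor (p + 1) ≤ exp 1 / √2 * (√2 * √(↑(p + 1))) := by
        rw [hfac]; gcongr
    _ = exp 1 * √(↑(p + 1)) := by field_simp
    _ ≤ exp 1 * √(↑(p + 1) + 1) := by gcongr; linarith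

lemma natCast_pow_self_pos (m : ℕ) : 0 < (m : ℝ) ^ m := by
  exact_mod_cast Nat.pow_self_pos

lemma prod_div_pow_self {ι : Type*} (s : Finset ι) (c : ι → ℕ) (x : ℝ) :
    ∏ j ∈ s, ((c j : ℝ) / x) ^ c j = (∏ j ∈ s, (c j : ℝ) ^ c j) / x ^ ∑ j ∈ s, c j := by
  simp_rw [div_pow]
  rw [prod_div_distrib, prod_pow_eq_pow_sum]

lemma multinomial_mul_prod_div_pow {ι : Type*} (s : Finset ι) (c : ι → ℕ) {n : ℕ}
    (hc : ∑ j ∈ s, c j = n) :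
    (Nat.multinomial s c : ℝ) * ∏ j ∈ s, ((c j : ℝ) / n) ^ c j
      = stirlingFactor n / ∏ j ∈ s, stirlingFactor (c j) := by
  have hspec : (∏ j ∈ s, ((c j)! : ℝ)) * Nat.multinomial s c = n ! := by
    rw [← hc]; exact_mod_cast Nat.multinomial_spec s c
  have hfac : ∏ j ∈ s, ((c j)! : ℝ) ≠ 0 := prod_ne_zero_iff.2 fun j _ => by positivity
  have hpow : ∏ j ∈ s, (c j : ℝ) ^ c j ≠ 0 :=
    prod_ne_zero_iff.2 fun j _ => (natCast_pow_self_pos _).ne'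
  have hn : (n : ℝ) ^ n ≠ 0 := (natCast_pow_self_pos n).ne'
  simp only [stirlingFactor, prod_div_distrib, prod_div_pow_self, hc, div_pow (n : ℝ)]
  rw [← hspec]
  field_simp

open MvPolynomial in
lemma card_filter_cnt_eq_multinomial {n k : ℕ} (c : Fin k → ℕ) (hc : ∑ j, c j = n) :
    #{z : Fin n → Fin k | cnt z = c} = Nat.multinomial univ c := by
  set d : Fin k →₀ ℕ := Finsupp.equivFunOnFinite.symm c
  have hmonomial (z : Fin n → Fin k) :
      ∏ i, (X (z i) : MvPolynomial (Fin k) ℕ) = ∏ j, X j ^ cnt z j := by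
    rw [← prod_fiberwise univ z]
    refine prod_congr rfl fun j _ => ?_
    rw [prod_congr rfl fun i hi => by rw [(mem_filter.1 hi).2], prod_const]
    rfl
  have hexpand :
      (∑ j, X j : MvPolynomial (Fin k) ℕ) ^ n = ∑ z : Fin n → Fin k, ∏ j, X j ^ cnt z j := by
    rw [← Fin.prod_const, prod_univ_sum, Fintype.piFinset_univ]
    exact sum_congr rfl fun z _ => hmonomial z
  have hcoeff := congrArg (coeff d) hexpand
  rw [coeff_sum_X_pow_of_fintype, coeff_sum] at hcoeff
  simp_rw [coeff_prod_X_pow] at hcoeff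
  have hd : d.sum (fun _ m => m) = n := by simp [d, Finsupp.sum_fintype, hc]
  have hmult : d.multinomial = Nat.multinomial univ c :=
    (Finsupp.multinomial_of_support_subset (subset_univ _)).symm
  have hind (z : Fin n → Fin k) :
      (d = Finsupp.indicator univ fun j _ => cnt z j) ↔ cnt z = c := by
    simp [d, Finsupp.ext_iff, funext_iff, eq_comm]
  simp only [hd, hmult, if_true, hind] at hcoeff
  exact_mod_cast (hcoeff.trans (sum_boole _ _)).symm

lemma sum_cnt {n k : ℕ} (z : Fin n → Fin k) : ∑ j, cnt z j = n := by
  simpa [cnt] using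
    (card_eq_sum_card_fiberwise (f := z) (s := univ) (t := univ) fun _ _ => mem_univ _).symm

lemma Rnk_eq_sum_piAntidiag (n k : ℕ) :
    Rnk n k = ∑ c ∈ piAntidiag (univ : Finset (Fin k)) n,
      stirlingFactor n / ∏ j, stirlingFactor (c j) := by
  rw [Rnk, ← sum_fiberwise_of_maps_to (g := cnt) (t := piAntidiag univ n)
    fun z _ => mem_piAntidiag.2 ⟨sum_cnt z, fun j _ => mem_univ j⟩]
  refine sum_congr rfl fun c hc => ?_
  have hsum := (mem_piAntidiag.1 hc).1
  rw [← multinomial_mul_prod_div_pow univ c hsum, ← card_filter_cnt_eq_multinomial c hsum,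
    sum_congr rfl fun z hz => by rw [mlLik, (mem_filter.1 hz).2], sum_const, nsmul_eq_mul]

lemma stirlingFactor_div_prod_le {ι : Type*} (s : Finset ι) (c : ι → ℕ) (n : ℕ) :
    stirlingFactor n / ∏ j ∈ s, stirlingFactor (c j)
      ≤ exp 1 * √(n + 1) * ∏ j ∈ s, (√(c j + 1))⁻¹ := by
  rw [prod_inv_distrib, ← div_eq_mul_inv]
  exact div_le_div₀ (by positivity) (stirlingFactor_le n) (prod_pos fun j _ => by positivity)
    (prod_le_prod (fun _ _ => by positivity) fun j _ => sqrt_succ_le_stirlingFactor (c j))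

lemma le_stirlingFactor_div_prod {ι : Type*} (s : Finset ι) (c : ι → ℕ) (n : ℕ) :
    √(n + 1) / exp 1 ^ #s * ∏ j ∈ s, (√(c j + 1))⁻¹
      ≤ stirlingFactor n / ∏ j ∈ s, stirlingFactor (c j) := by
  rw [prod_inv_distrib, ← div_eq_mul_inv, div_div, ← prod_const, ← prod_mul_distrib]
  exact div_le_div₀ (stirlingFactor_pos n).le (sqrt_succ_le_stirlingFactor n)
    (prod_pos fun j _ => stirlingFactor_pos _)
    (prod_le_prod (fun j _ => (stirlingFactor_pos _).le) fun j _ => stirlingFactor_le (c j))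

noncomputable def invSqrtCompositionSum (k n : ℕ) : ℝ :=
  ∑ c ∈ piAntidiag (univ : Finset (Fin k)) n, ∏ j, (√(c j + 1))⁻¹

lemma Rnk_le (n k : ℕ) : Rnk n k ≤ exp 1 * √(n + 1) * invSqrtCompositionSum k n := by
  rw [Rnk_eq_sum_piAntidiag, invSqrtCompositionSum, mul_sum]
  exact sum_le_sum fun c _ => stirlingFactor_div_prod_le _ _ _

lemma le_Rnk (n k : ℕ) : √(n + 1) / exp 1 ^ k * invSqrtCompositionSum k n ≤ Rnk n k := by
  rw [Rnk_eq_sum_piAntidiag, invSqrtCompositionSum, mul_sum]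
  refine sum_le_sum fun c _ => ?_
  simpa using le_stirlingFactor_div_prod univ c n

lemma sum_range_inv_sqrt_succ_le (n : ℕ) : ∑ m ∈ range n, (√(m + 1))⁻¹ ≤ 2 * √n := by
  induction n with
  | zero => simp
  | succ n ih =>
    have hstep : (√(n + 1))⁻¹ ≤ 2 * (√(n + 1) - √n) := by
      have hpos : 0 < √(n + 1) := by positivity
      have hle : √n ≤ √(n + 1) := by gcongr; linarith
      rw [inv_le_iff_one_le_mul₀ hpos]
      nlinarith [sq_sqrt (n.cast_nonneg : (0 : ℝ) ≤ n), sq_sqrt (by positivity : (0 : ℝ) ≤ n + 1)]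
    rw [sum_range_succ]
    push_cast
    linarith

lemma sum_piAntidiag_prod_succAbove_le {K : ℕ} (f : ℕ → ℝ) (hf : ∀ m, 0 ≤ f m) (j₀ : Fin (K + 1))
    (n : ℕ) :
    ∑ c ∈ piAntidiag univ n, ∏ i, f (c (j₀.succAbove i)) ≤ (∑ m ∈ range (n + 1), f m) ^ K := by
  set restrict : (Fin (K + 1) → ℕ) → Fin K → ℕ := fun c => c ∘ j₀.succAbove
  have hinj : Set.InjOn restrict (piAntidiag univ n : Finset (Fin (K + 1) → ℕ)) := by
    intro c hc c' hc' h
    have hrest (i : Fin K) : c (j₀.succAbove i) = c' (j₀.succAbove i) := congrFun h i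
    have hsum := (mem_piAntidiag.1 hc).1.trans (mem_piAntidiag.1 hc').1.symm
    rw [Fin.sum_univ_succAbove _ j₀, Fin.sum_univ_succAbove _ j₀, sum_congr rfl fun i _ => hrest i,
      add_left_inj] at hsum
    ext j
    rcases Fin.eq_self_or_eq_succAbove j₀ j with rfl | ⟨i, rfl⟩
    · exact hsum
    · exact hrest i
  have hmaps : Set.MapsTo restrict (piAntidiag univ n : Finset (Fin (K + 1) → ℕ))
      (Fintype.piFinset fun _ : Fin K => range (n + 1) : Finset (Fin K → ℕ)) := by
    intro c hc
    have hsum := (mem_piAntidiag.1 hc).1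
    simp only [mem_coe, Fintype.mem_piFinset, mem_range, Nat.lt_succ_iff]
    intro i
    rw [← hsum]
    exact single_le_sum (fun j _ => Nat.zero_le (c j)) (mem_univ _)
  calc ∑ c ∈ piAntidiag univ n, ∏ i, f (c (j₀.succAbove i))
      = ∑ d ∈ (piAntidiag univ n).image restrict, ∏ i, f (d i) :=
        (sum_image (f := fun d => ∏ i, f (d i)) hinj).symm
    _ ≤ ∑ d ∈ Fintype.piFinset fun _ => range (n + 1), ∏ i, f (d i) :=
        sum_le_sum_of_subset_of_nonneg (image_subset_iff.2 hmaps)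
          fun d _ _ => prod_nonneg fun i _ => hf _
    _ = (∑ m ∈ range (n + 1), f m) ^ K := by rw [← prod_univ_sum, prod_const, card_fin]

lemma exists_succ_le_mul_succ {K n : ℕ} {c : Fin (K + 1) → ℕ} (hc : c ∈ piAntidiag univ n) :
    ∃ j, n + 1 ≤ (K + 1) * (c j + 1) := by
  have hsum := (mem_piAntidiag.1 hc).1
  have : ∑ _j : Fin (K + 1), (n + 1) ≤ ∑ j, (K + 1) * (c j + 1) := by
    simp only [sum_const, card_univ, Fintype.card_fin, smul_eq_mul, ← mul_sum, sum_add_distrib,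
      hsum]
    nlinarith
  obtain ⟨j, -, hj⟩ := exists_le_of_sum_le univ_nonempty this
  exact ⟨j, hj⟩

lemma sqrt_succ_mul_invSqrtCompositionSum_le (K n : ℕ) :
    √(n + 1) * invSqrtCompositionSum (K + 1) n ≤ (K + 1) * √(K + 1) * 2 ^ K * √(n + 1) ^ K := by
  set f : ℕ → ℝ := fun m => (√(m + 1))⁻¹
  have hf (m : ℕ) : 0 ≤ f m := by positivity
  have hterm (c : Fin (K + 1) → ℕ) (hc : c ∈ piAntidiag univ n) :
      √(n + 1) * ∏ j, f (c j) ≤ ∑ j₀ : Fin (K + 1), √(K + 1) * ∏ i, f (c (j₀.succAbove i)) := by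
    obtain ⟨j₀, hj₀⟩ := exists_succ_le_mul_succ hc
    have hlarge : √(n + 1) * f (c j₀) ≤ √(K + 1) := by
      have : √(n + 1) ≤ √(K + 1) * √(c j₀ + 1) := by
        rw [← sqrt_mul (by positivity)]
        gcongr
        exact_mod_cast hj₀
      simp only [f]
      rw [mul_inv_le_iff₀ (by positivity)]
      exact this
    calc √(n + 1) * ∏ j, f (c j) = √(n + 1) * f (c j₀) * ∏ i, f (c (j₀.succAbove i)) := by
          rw [Fin.prod_univ_succAbove _ j₀, mul_assoc]
      _ ≤ √(K + 1) * ∏ i, f (c (j₀.succAbove i)) := by gcongr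
      _ ≤ _ := single_le_sum (f := fun j₀ => √(K + 1) * ∏ i, f (c (j₀.succAbove i)))
          (fun j _ => by positivity) (mem_univ j₀)
  have hrange : ∑ m ∈ range (n + 1), f m ≤ 2 * √(n + 1) := by
    simpa using sum_range_inv_sqrt_succ_le (n + 1)
  calc √(n + 1) * invSqrtCompositionSum (K + 1) n
      ≤ ∑ c ∈ piAntidiag univ n, ∑ j₀ : Fin (K + 1), √(K + 1) * ∏ i, f (c (j₀.succAbove i)) := by
        rw [invSqrtCompositionSum, mul_sum]
        exact sum_le_sum hterm
    _ = ∑ j₀ : Fin (K + 1), √(K + 1) * ∑ c ∈ piAntidiag univ n, ∏ i, f (c (j₀.succAbove i)) := by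
        rw [sum_comm]
        simp only [mul_sum]
    _ ≤ ∑ _j₀ : Fin (K + 1), √(K + 1) * (2 * √(n + 1)) ^ K := by
        gcongr with j₀
        exact (sum_piAntidiag_prod_succAbove_le f hf j₀ n).trans
          (pow_le_pow_left₀ (sum_nonneg fun m _ => hf m) hrange K)
    _ = (K + 1) * √(K + 1) * 2 ^ K * √(n + 1) ^ K := by
        simp only [sum_const, card_univ, Fintype.card_fin, nsmul_eq_mul, mul_pow]
        push_cast
        ring

lemma card_piAntidiag_fin_succ (K n : ℕ) :
    #(piAntidiag (univ : Finset (Fin (K + 1))) n) = (n + K).choose K := by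
  classical
  rw [← map_sym_eq_piAntidiag, card_map, sym_univ, card_univ, Sym.card_sym_eq_choose,
    Fintype.card_fin, show K + 1 + n - 1 = n + K by omega, Nat.choose_symm_add]

lemma le_sqrt_succ_mul_invSqrtCompositionSum (K n : ℕ) :
    √(n + 1) ^ K / K ! ≤ √(n + 1) * invSqrtCompositionSum (K + 1) n := by
  set r := √(n + 1)
  have hr : 0 < r := by positivity
  have hr2 : r ^ 2 = n + 1 := sq_sqrt (by positivity)
  have hterm (c) (hc : c ∈ piAntidiag (univ : Finset (Fin (K + 1))) n) :
      r⁻¹ ^ (K + 1) ≤ ∏ j, (√(c j + 1))⁻¹ := by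
    have hsum := (mem_piAntidiag.1 hc).1
    calc r⁻¹ ^ (K + 1) = ∏ _j : Fin (K + 1), r⁻¹ := by simp
      _ ≤ _ := prod_le_prod (fun _ _ => by positivity) fun j _ => ?_
    have : (c j : ℝ) ≤ n := by
      rw [← hsum]
      exact_mod_cast single_le_sum (fun j _ => Nat.zero_le (c j)) (mem_univ j)
    simp only [r]
    gcongr
  have hcard : ((n + 1 : ℝ)) ^ K / K ! ≤ #(piAntidiag (univ : Finset (Fin (K + 1))) n) := by
    rw [card_piAntidiag_fin_succ]
    have := Nat.pow_le_choose (α := ℝ) K (n + K)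
    rwa [show n + K + 1 - K = n + 1 by omega, Nat.cast_add_one] at this
  calc r ^ K / K ! = r * ((n + 1 : ℝ) ^ K / K ! * r⁻¹ ^ (K + 1)) := by
        rw [← hr2, inv_pow, pow_succ]
        field_simp
        ring
    _ ≤ r * (#(piAntidiag (univ : Finset (Fin (K + 1))) n) * r⁻¹ ^ (K + 1)) := by gcongr
    _ ≤ r * invSqrtCompositionSum (K + 1) n := by
        rw [invSqrtCompositionSum, ← nsmul_eq_mul, ← sum_const]
        gcongr with c hc
        exact hterm c hc

lemma Rnk_succ_le (K n : ℕ) :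
    Rnk n (K + 1) ≤ exp 1 * ((K + 1) * √(K + 1) * 2 ^ K) * √(n + 1) ^ K :=
  calc Rnk n (K + 1) ≤ exp 1 * (√(n + 1) * invSqrtCompositionSum (K + 1) n) := by
        rw [← mul_assoc]; exact Rnk_le n (K + 1)
    _ ≤ exp 1 * ((K + 1) * √(K + 1) * 2 ^ K * √(n + 1) ^ K) :=
        mul_le_mul_of_nonneg_left (sqrt_succ_mul_invSqrtCompositionSum_le K n) (exp_pos 1).le
    _ = _ := by ring

lemma le_Rnk_succ (K n : ℕ) : (K ! * exp 1 ^ (K + 1))⁻¹ * √(n + 1) ^ K ≤ Rnk n (K + 1) :=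
  calc (K ! * exp 1 ^ (K + 1))⁻¹ * √(n + 1) ^ K = √(n + 1) ^ K / K ! / exp 1 ^ (K + 1) := by
        field_simp
    _ ≤ √(n + 1) * invSqrtCompositionSum (K + 1) n / exp 1 ^ (K + 1) := by
        gcongr; exact le_sqrt_succ_mul_invSqrtCompositionSum K n
    _ = √(n + 1) / exp 1 ^ (K + 1) * invSqrtCompositionSum (K + 1) n := by ring
    _ ≤ Rnk n (K + 1) := le_Rnk n (K + 1)

lemma abs_log_sub_log_le {a b x y : ℝ} (ha : 0 < a) (hx : 0 < x) (hlo : a * x ≤ y)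
    (hhi : y ≤ b * x) : |log y - log x| ≤ |log a| + |log b| := by
  have hy : 0 < y := (mul_pos ha hx).trans_le hlo
  rw [← log_div hy.ne' hx.ne']
  have hlo' : log a ≤ log (y / x) := log_le_log ha ((le_div_iff₀ hx).2 hlo)
  have hhi' : log (y / x) ≤ log b :=
    log_le_log (div_pos hy hx) ((div_le_iff₀ hx).2 hhi)
  rw [abs_le]
  constructor <;> linarith [neg_abs_le (log a), le_abs_self (log b), abs_nonneg (log a),
    abs_nonneg (log b)]

/-- `log R(n,k) = ((k-1)/2) log n + O(1)`. -/
theorem stmt9 (k : ℕ) (hk : 2 ≤ k) :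
    ∃ C : ℝ, ∀ n : ℕ, 1 ≤ n →
      |Real.log (Rnk n k) - ((k : ℝ) - 1) / 2 * Real.log n| ≤ C := by
  obtain ⟨K, rfl⟩ : ∃ K, k = K + 1 := ⟨k - 1, by omega⟩
  set a : ℝ := (K ! * exp 1 ^ (K + 1))⁻¹
  set b : ℝ := exp 1 * ((K + 1) * √(K + 1) * 2 ^ K) * √2 ^ K
  refine ⟨|log a| + |log b|, fun n hn => ?_⟩
  have hn' : (1 : ℝ) ≤ n := by exact_mod_cast hn
  have hlog : log (√n ^ K) = ((↑(K + 1) : ℝ) - 1) / 2 * log n := by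
    rw [log_pow, log_sqrt (by positivity)]; push_cast; ring
  have hsqrt : √(n + 1) ≤ √2 * √n := by
    rw [← sqrt_mul zero_le_two]; gcongr; linarith
  rw [← hlog]
  refine abs_log_sub_log_le (by positivity) (by positivity) ?_ ?_
  · calc a * √n ^ K ≤ a * √(n + 1) ^ K := by gcongr; linarith
      _ ≤ Rnk n (K + 1) := le_Rnk_succ K n
  · calc Rnk n (K + 1) ≤ exp 1 * ((K + 1) * √(K + 1) * 2 ^ K) * √(n + 1) ^ K := Rnk_succ_le K n
      _ ≤ exp 1 * ((K + 1) * √(K + 1) * 2 ^ K) * (√2 * √n) ^ K := by gcongr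
      _ = b * √n ^ K := by rw [mul_pow]; ring
end
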